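/- Let Ω be a finite type, let μ and ν be probability mass functions on Ω with supp μ ⊆ supp ν, and let ε be a real number with 0 ≤ ε ≤ 1. Then D((1−ε)·μ + ε·ν ‖ ν) ≤ (1−ε)·D(μ ‖ ν) − (1 − ∑_{x ∈ supp μ} ν(x)) · ε · log₂(1/ε), where for ε = 0 the term ε·log₂(1/ε) is interpreted as 0. -/

import Mathlib

open Finset

/-- Kullback–Leibler divergence in base 2 between two finitely supported
distributions, summing `p x * log₂ (p x / q x)` over the support of `p`. -/
noncomputable def klDiv2 {Ω : Type*} [Fintype Ω] (p q : Ω → ℝ) : ℝ :=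
  ∑ x, if 0 < p x then p x * Real.logb 2 (p x / q x) else 0

/-!
The inequality holds termwise. On the support of `μ`, convexity of `t ↦ t log t` applied at
`μ x / ν x` and `1` (joint convexity of `(p, q) ↦ p log (p / q)`) bounds the term of the mixture
by `(1 - ε)` times the term of `μ`. Off the support of `μ` the mixture is `ε ν x`, whose term is
exactly `- ν x · ε log₂ (1 / ε)`; these `ν x` add up to `1 - ∑_{supp μ} ν`.
-/

open Real

theorem mix_mul_log_div_le {m n ε : ℝ} (hm : 0 ≤ m) (hn : 0 < n) (hε0 : 0 ≤ ε) (hε1 : ε ≤ 1) :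
    ((1 - ε) * m + ε * n) * log (((1 - ε) * m + ε * n) / n) ≤ (1 - ε) * (m * log (m / n)) := by
  have hconv := convexOn_mul_log.2 (Set.mem_Ici.2 (div_nonneg hm hn.le))
    (Set.mem_Ici.2 zero_le_one) (sub_nonneg.2 hε1) hε0 (sub_add_cancel 1 ε)
  simp only [smul_eq_mul, mul_one, log_one, mul_zero, add_zero] at hconv
  have hmix : ((1 - ε) * m + ε * n) / n = (1 - ε) * (m / n) + ε := by field_simp
  calc ((1 - ε) * m + ε * n) * log (((1 - ε) * m + ε * n) / n)
      = n * (((1 - ε) * (m / n) + ε) * log ((1 - ε) * (m / n) + ε)) := by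
        rw [hmix]; field_simp
    _ ≤ n * ((1 - ε) * (m / n * log (m / n))) := by gcongr
    _ = (1 - ε) * (m * log (m / n)) := by field_simp

noncomputable def klTerm (p q : ℝ) : ℝ := if 0 < p then p * logb 2 (p / q) else 0

theorem klDiv2_eq_sum_klTerm {Ω : Type*} [Fintype Ω] (p q : Ω → ℝ) :
    klDiv2 p q = ∑ x, klTerm (p x) (q x) := rfl

theorem klTerm_mix_le_of_pos {m n ε : ℝ} (hm : 0 < m) (hn : 0 < n) (hε0 : 0 ≤ ε)
    (hε1 : ε ≤ 1) : klTerm ((1 - ε) * m + ε * n) n ≤ (1 - ε) * klTerm m n := by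
  have hmix : 0 < (1 - ε) * m + ε * n := by
    rcases hε1.lt_or_eq with hε | rfl
    · nlinarith [mul_pos (sub_pos.2 hε) hm, mul_nonneg hε0 hn.le]
    · simpa using hn
  simp only [klTerm, if_pos hm, if_pos hmix, logb, ← mul_div_assoc]
  exact div_le_div_of_nonneg_right (mix_mul_log_div_le hm.le hn hε0 hε1) (log_pos one_lt_two).le

theorem klTerm_mul_self_le {n ε : ℝ} (hε0 : 0 ≤ ε) (hε1 : ε ≤ 1) :
    klTerm (ε * n) n ≤ -(n * (ε * logb 2 (1 / ε))) := by
  unfold klTerm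
  split_ifs with h
  · have hn : n ≠ 0 := by rintro rfl; simp at h
    rw [mul_div_cancel_right₀ ε hn, one_div, logb_inv]
    exact le_of_eq (by ring)
  · have hlog : 0 ≤ logb 2 (1 / ε) := by
      rcases hε0.eq_or_lt with rfl | hε
      · simp
      · exact logb_nonneg one_lt_two (one_le_one_div hε hε1)
    have := mul_nonpos_of_nonpos_of_nonneg (not_lt.1 h) hlog
    linarith

theorem klTerm_mix_le {m n ε : ℝ} (hm : 0 ≤ m) (hmn : 0 < m → 0 < n) (hε0 : 0 ≤ ε)
    (hε1 : ε ≤ 1) :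
    klTerm ((1 - ε) * m + ε * n) n ≤
      (1 - ε) * klTerm m n - (if 0 < m then 0 else n) * (ε * logb 2 (1 / ε)) := by
  by_cases hpos : 0 < m
  · simpa [hpos] using klTerm_mix_le_of_pos hpos (hmn hpos) hε0 hε1
  · obtain rfl : m = 0 := le_antisymm (not_lt.1 hpos) hm
    have hzero : klTerm 0 n = 0 := by simp [klTerm]
    rw [if_neg hpos, hzero, mul_zero, zero_add, zero_sub]
    exact klTerm_mul_self_le hε0 hε1

theorem stmt_6_general {Ω : Type*} [Fintype Ω] (μ ν : Ω → ℝ)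
    (hμ0 : ∀ x, 0 ≤ μ x)
    (hν1 : ∑ x, ν x = 1)
    (hsupp : ∀ x, 0 < μ x → 0 < ν x)
    (ε : ℝ) (hε0 : 0 ≤ ε) (hε1 : ε ≤ 1) :
    klDiv2 (fun x => (1 - ε) * μ x + ε * ν x) ν ≤
      (1 - ε) * klDiv2 μ ν -
        (1 - ∑ x with 0 < μ x, ν x) * (ε * Real.logb 2 (1 / ε)) := by
  have hcompl : 1 - ∑ x with 0 < μ x, ν x = ∑ x, if 0 < μ x then 0 else ν x := by
    rw [← hν1, ← sum_filter_add_sum_filter_not univ (fun x => 0 < μ x), sum_ite]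
    simp
  calc klDiv2 (fun x => (1 - ε) * μ x + ε * ν x) ν
      ≤ ∑ x, ((1 - ε) * klTerm (μ x) (ν x) -
          (if 0 < μ x then 0 else ν x) * (ε * logb 2 (1 / ε))) :=
        sum_le_sum fun x _ => klTerm_mix_le (hμ0 x) (hsupp x) hε0 hε1
    _ = (1 - ε) * klDiv2 μ ν - (1 - ∑ x with 0 < μ x, ν x) * (ε * logb 2 (1 / ε)) := by
        rw [sum_sub_distrib, ← mul_sum, ← sum_mul, hcompl, klDiv2_eq_sum_klTerm]

theorem stmt_6 {Ω : Type*} [Fintype Ω] (μ ν : Ω → ℝ)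
    (hμ0 : ∀ x, 0 ≤ μ x) (hν0 : ∀ x, 0 ≤ ν x)
    (hμ1 : ∑ x, μ x = 1) (hν1 : ∑ x, ν x = 1)
    (hsupp : ∀ x, 0 < μ x → 0 < ν x)
    (ε : ℝ) (hε0 : 0 ≤ ε) (hε1 : ε ≤ 1) :
    klDiv2 (fun x => (1 - ε) * μ x + ε * ν x) ν ≤
      (1 - ε) * klDiv2 μ ν -
        (1 - ∑ x with 0 < μ x, ν x) * (ε * Real.logb 2 (1 / ε)) :=
  stmt_6_general μ ν hμ0 hν1 hsupp ε hε0 hε1
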